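/- arXiv:0902.3483 — 2 statements merged into one kernel-verified Lean document; each statement's English description precedes it below -/
import Mathlib

section
/- Let K be a bounded subset of a Banach space X and let L be a closed linear subspace of X that does not contain K. Set K₀ = K ∩ L. Then there exists a constant C with 0 < C < ∞ such that d_n(K₀) ≤ C · d_{n+1}(K) for all n ∈ ℕ ∪ {0}. -/
open Filter Topology Metric
open scoped ENNReal NNReal

/-- The Kolmogorov `n`-width of a set `K`: the infimum over all `n`-dimensional linear
subspaces `V` of `sup_{x ∈ K} dist(x, V)` (valued in `ℝ≥0∞` to avoid junk values). -/
noncomputable def kolWidth {X : Type*} [NormedAddCommGroup X] [NormedSpace ℝ X]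
    (K : Set X) (n : ℕ) : ℝ≥0∞ :=
  ⨅ (V : Submodule ℝ X) (_ : FiniteDimensional ℝ V ∧ Module.finrank ℝ V = n),
    ⨆ x ∈ K, EMetric.infEdist x (V : Set X)

/-- A sequence is lacunary if `liminf aₙ₊₁/aₙ = 0`. -/
def Lacunary (a : ℕ → ℝ≥0∞) : Prop :=
  Filter.liminf (fun n => a (n + 1) / a n) Filter.atTop = 0

/-!
Separate a point `x₀ ∈ K \ L` from `L` by a functional `f` with `f = 0` on `L` and `f x₀ = 1`.
Given an `(n+1)`-dimensional `V` approximating `K` within `ε`, either `x₀` is far from `V`, so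
`ε` is bounded below and any `n`-dimensional subspace of `V` does, or some `v₀ ∈ V` near `x₀`
has `f v₀ ≥ 1/2` and bounded norm. Then `V ∩ ker f` is `n`-dimensional, and correcting an
approximant `v ∈ V` of `x ∈ K ∩ L` along `v₀` into `ker f` costs only a bounded multiple of
`‖x - v‖`, since `|f v| = |f (v - x)|`.
-/

open Module

theorem Submodule.exists_strongDual_eq_one_of_notMem {E : Type*} [TopologicalSpace E]
    [AddCommGroup E] [IsTopologicalAddGroup E] [Module ℝ E] [ContinuousSMul ℝ E]
    [LocallyConvexSpace ℝ E] (L : Submodule ℝ E) (hL : IsClosed (L : Set E)) {x : E}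
    (hx : x ∉ L) : ∃ f : StrongDual ℝ E, (∀ y ∈ L, f y = 0) ∧ f x = 1 := by
  obtain ⟨f, u, hfL, hux⟩ := geometric_hahn_banach_closed_point L.convex hL hx
  have hu : 0 < u := by simpa using hfL 0 L.zero_mem
  -- `f` is bounded above by `u` on the subspace `L`, so it vanishes there.
  have hf : ∀ y ∈ L, f y = 0 := by
    intro y hy
    by_contra hfy
    have h := hfL ((2 * u / f y) • y) (L.smul_mem _ hy)
    rw [map_smul, smul_eq_mul, div_mul_cancel₀ _ hfy] at h
    linarith
  have hfx : f x ≠ 0 := (hu.trans hux).ne'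
  refine ⟨(f x)⁻¹ • f, fun y hy => by simp [hf y hy], ?_⟩
  simp [hfx]

theorem Submodule.finrank_inf_ker_add_one {K E : Type*} [DivisionRing K] [AddCommGroup E]
    [Module K E] (V : Submodule K E) [FiniteDimensional K V] (f : E →ₗ[K] K) {v : E}
    (hv : v ∈ V) (hfv : f v ≠ 0) : finrank K ↥(V ⊓ LinearMap.ker f) + 1 = finrank K V := by
  have hf : f ∘ₗ V.subtype ≠ 0 := fun h => hfv (LinearMap.congr_fun h ⟨v, hv⟩)
  rw [← Submodule.map_comap_subtype, Submodule.finrank_map_subtype_eq, ← LinearMap.ker_comp]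
  exact Module.Dual.finrank_ker_add_one_of_ne_zero hf

theorem Submodule.exists_le_finrank_add_one_eq {K E : Type*} [Field K] [AddCommGroup E]
    [Module K E] (V : Submodule K E) [FiniteDimensional K V] (hV : V ≠ ⊥) :
    ∃ W ≤ V, finrank K W + 1 = finrank K V := by
  obtain ⟨v, hv, hv0⟩ := Submodule.exists_mem_ne_zero_of_ne_bot hV
  obtain ⟨φ, hφ⟩ : ∃ φ : Module.Dual K E, φ v ≠ 0 := by
    by_contra! h
    exact hv0 ((Module.forall_dual_apply_eq_zero_iff K v).1 h)
  exact ⟨V ⊓ LinearMap.ker φ, inf_le_left, V.finrank_inf_ker_add_one φ hv hφ⟩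

theorem infDist_inf_ker_le {𝕜 X : Type*} [NontriviallyNormedField 𝕜] [SeminormedAddCommGroup X]
    [NormedSpace 𝕜 X] (V : Submodule 𝕜 X) (f : StrongDual 𝕜 X) {v₀ : X} (hv₀ : v₀ ∈ V)
    (hfv₀ : f v₀ ≠ 0) {x : X} (hx : f x = 0) :
    infDist x (V ⊓ LinearMap.ker (f : X →ₗ[𝕜] 𝕜) : Submodule 𝕜 X) ≤
      (1 + ‖f‖ * ‖v₀‖ / ‖f v₀‖) * infDist x V := by
  set C := 1 + ‖f‖ * ‖v₀‖ / ‖f v₀‖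
  have hC : 0 < C := by positivity
  rw [← div_le_iff₀' hC, le_infDist ⟨0, V.zero_mem⟩]
  intro v hv
  rw [div_le_iff₀' hC]
  set w := v - (f v / f v₀) • v₀
  have hw : w ∈ V ⊓ LinearMap.ker (f : X →ₗ[𝕜] 𝕜) :=
    ⟨V.sub_mem hv (V.smul_mem _ hv₀), by simp [w, div_mul_cancel₀ _ hfv₀]⟩
  have hfv : ‖f v‖ ≤ ‖f‖ * dist x v := by
    simpa [hx, dist_eq_norm, norm_sub_rev] using f.le_opNorm (x - v)
  calc _ ≤ dist x w := infDist_le_dist_of_mem hw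
    _ = ‖(x - v) + (f v / f v₀) • v₀‖ := by
        rw [dist_eq_norm, sub_sub_eq_add_sub, add_sub_right_comm]
    _ ≤ dist x v + ‖f v‖ / ‖f v₀‖ * ‖v₀‖ := by
        rw [dist_eq_norm, ← norm_div, ← norm_smul]; exact norm_add_le _ _
    _ ≤ dist x v + ‖f‖ * dist x v / ‖f v₀‖ * ‖v₀‖ := by gcongr
    _ = C * dist x v := by simp only [C]; ring

theorem Metric.ofReal_infDist {α : Type*} [PseudoMetricSpace α] {x : α} {s : Set α}
    (hs : s.Nonempty) : ENNReal.ofReal (infDist x s) = infEDist x s :=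
  ENNReal.ofReal_toReal (infEDist_ne_top hs)

theorem kolWidth_le_mul_of_forall {X : Type*} [NormedAddCommGroup X] [NormedSpace ℝ X]
    {K K' : Set X} {m n : ℕ} {C : ℝ≥0} (hC : C ≠ 0)
    (h : ∀ V : Submodule ℝ X, FiniteDimensional ℝ V → finrank ℝ V = m →
      ∃ W : Submodule ℝ X, FiniteDimensional ℝ W ∧ finrank ℝ W = n ∧
        ∀ x ∈ K', infEDist x W ≤ C * ⨆ y ∈ K, infEDist y V) :
    kolWidth K' n ≤ C * kolWidth K m := by
  simp only [kolWidth, ENNReal.mul_iInf_of_ne (ENNReal.coe_ne_zero.2 hC) ENNReal.coe_ne_top]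
  refine le_iInf₂ fun V hV => ?_
  obtain ⟨W, hW, hWn, hWK⟩ := h V hV.1 hV.2
  exact iInf₂_le_of_le W ⟨hW, hWn⟩ (iSup₂_le hWK)

theorem exists_finrank_eq_infDist_le_mul_max {X : Type*} [NormedAddCommGroup X]
    [NormedSpace ℝ X] (f : StrongDual ℝ X) {x₀ : X} (hfx₀ : f x₀ = 1) {R : ℝ} (hx₀R : ‖x₀‖ ≤ R)
    (V : Submodule ℝ X) [FiniteDimensional ℝ V] {n : ℕ} (hV : finrank ℝ V = n + 1) :
    ∃ W : Submodule ℝ X, FiniteDimensional ℝ W ∧ finrank ℝ W = n ∧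
      ∀ x, f x = 0 → ‖x‖ ≤ R →
        infDist x W ≤ 2 * (1 + ‖f‖ * R) * max (infDist x V) (infDist x₀ V) := by
  have hf : 0 < ‖f‖ := norm_pos_iff.2 fun h => by simp [h] at hfx₀
  have hR : 0 ≤ R := (norm_nonneg x₀).trans hx₀R
  set t := (2 * ‖f‖)⁻¹
  have hft : ‖f‖ * t = 1 / 2 := by simp only [t]; field_simp
  rcases lt_or_ge (infDist x₀ V) t with hnear | hfar
  · obtain ⟨v₀, hv₀, hxv₀⟩ := (infDist_lt_iff ⟨0, V.zero_mem⟩).1 hnear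
    have hfv₀ : 1 / 2 ≤ f v₀ := by
      have h : f x₀ - f v₀ ≤ ‖f‖ * dist x₀ v₀ := by
        rw [← map_sub, dist_eq_norm]; exact (le_abs_self _).trans (f.le_opNorm _)
      linarith [mul_le_mul_of_nonneg_left hxv₀.le hf.le]
    have hv₀R : ‖v₀‖ ≤ R + t := by
      linarith [norm_le_norm_add_norm_sub x₀ v₀, dist_eq_norm x₀ v₀]
    have hcoeff : 1 + ‖f‖ * ‖v₀‖ / ‖f v₀‖ ≤ 2 * (1 + ‖f‖ * R) := by
      have hv₀f : ‖v₀‖ / ‖f v₀‖ ≤ 2 * (R + t) := by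
        rw [Real.norm_of_nonneg (by linarith), div_le_iff₀ (by linarith)]
        nlinarith [norm_nonneg v₀]
      calc 1 + ‖f‖ * ‖v₀‖ / ‖f v₀‖ = 1 + ‖f‖ * (‖v₀‖ / ‖f v₀‖) := by ring
        _ ≤ 1 + ‖f‖ * (2 * (R + t)) := by gcongr
        _ = 2 * (1 + ‖f‖ * R) := by linear_combination 2 * hft
    refine ⟨V ⊓ LinearMap.ker (f : X →ₗ[ℝ] ℝ), inferInstance,
      by linarith [V.finrank_inf_ker_add_one (f : X →ₗ[ℝ] ℝ) hv₀ (by simp; linarith)],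
      fun x hx _ => ?_⟩
    calc _ ≤ (1 + ‖f‖ * ‖v₀‖ / ‖f v₀‖) * infDist x V :=
          infDist_inf_ker_le V f hv₀ (by linarith) hx
      _ ≤ _ := mul_le_mul hcoeff (le_max_left _ _) infDist_nonneg (by positivity)
  · obtain ⟨W, hWV, hWn⟩ := V.exists_le_finrank_add_one_eq (by
      rintro rfl; simp at hV)
    refine ⟨W, Submodule.finiteDimensional_of_le hWV, by linarith, fun x _ hxR => ?_⟩
    calc infDist x W ≤ ‖x‖ := by simpa using infDist_le_dist_of_mem (x := x) W.zero_mem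
      _ ≤ 2 * t + 2 * (‖f‖ * t) * R := by rw [hft]; linarith [show 0 < t by positivity]
      _ = 2 * (1 + ‖f‖ * R) * t := by ring
      _ ≤ _ := by gcongr; exact hfar.trans (le_max_right _ _)

theorem kolWidth_inter_closed_subspace_le_general
    {X : Type*} [NormedAddCommGroup X] [NormedSpace ℝ X]
    (K : Set X) (hK : Bornology.IsBounded K)
    (L : Submodule ℝ X) (hLclosed : IsClosed (L : Set X)) (hKL : ¬ K ⊆ (L : Set X)) :
    ∃ C : ℝ≥0, 0 < C ∧
      ∀ n : ℕ, kolWidth (K ∩ (L : Set X)) n ≤ (C : ℝ≥0∞) * kolWidth K (n + 1) := by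
  obtain ⟨x₀, hx₀K, hx₀L⟩ := Set.not_subset.mp hKL
  obtain ⟨f, hfL, hfx₀⟩ := L.exists_strongDual_eq_one_of_notMem hLclosed hx₀L
  obtain ⟨R, hKR⟩ : ∃ R, ∀ x ∈ K, ‖x‖ ≤ R := by
    obtain ⟨R, hR⟩ := hK.subset_closedBall 0
    exact ⟨R, fun x hx => mem_closedBall_zero_iff.1 (hR hx)⟩
  set C := 2 * (1 + ‖f‖ * R)
  have hC : 0 < C := by have := (norm_nonneg x₀).trans (hKR x₀ hx₀K); positivity
  refine ⟨C.toNNReal, Real.toNNReal_pos.2 hC, fun n =>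
    kolWidth_le_mul_of_forall (Real.toNNReal_pos.2 hC).ne' fun V _ hV => ?_⟩
  obtain ⟨W, hW, hWn, hWdist⟩ :=
    exists_finrank_eq_infDist_le_mul_max f hfx₀ (hKR x₀ hx₀K) V hV
  refine ⟨W, hW, hWn, fun x hx => ?_⟩
  have hV0 : (V : Set X).Nonempty := ⟨0, V.zero_mem⟩
  calc infEDist x W ≤ ENNReal.ofReal (C * max (infDist x V) (infDist x₀ V)) := by
        rw [← ofReal_infDist ⟨0, W.zero_mem⟩]
        exact ENNReal.ofReal_le_ofReal (hWdist x (hfL x hx.2) (hKR x hx.1))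
    _ = C.toNNReal * max (infEDist x V) (infEDist x₀ V) := by
        rw [ENNReal.ofReal_mul hC.le, ENNReal.ofReal_max, ofReal_infDist hV0, ofReal_infDist hV0]
        rfl
    _ ≤ C.toNNReal * ⨆ y ∈ K, infEDist y V := by
        have hS : ∀ y ∈ K, infEDist y V ≤ ⨆ y ∈ K, infEDist y V := fun y hy =>
          le_biSup (fun y => infEDist y (V : Set X)) hy
        exact mul_le_mul_right (max_le (hS x hx.1) (hS x₀ hx₀K)) _

/-- If `K` is bounded and `L` is a closed subspace not containing `K`, then the widths of
`K₀ = K ∩ L` satisfy `dₙ(K₀) ≤ C · dₙ₊₁(K)` for some constant `0 < C < ∞`. -/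
theorem kolWidth_inter_closed_subspace_le
    {X : Type*} [NormedAddCommGroup X] [NormedSpace ℝ X] [CompleteSpace X]
    (K : Set X) (hK : Bornology.IsBounded K)
    (L : Submodule ℝ X) (hLclosed : IsClosed (L : Set X)) (hKL : ¬ K ⊆ (L : Set X)) :
    ∃ C : ℝ≥0, 0 < C ∧
      ∀ n : ℕ, kolWidth (K ∩ (L : Set X)) n ≤ (C : ℝ≥0∞) * kolWidth K (n + 1) :=
  kolWidth_inter_closed_subspace_le_general K hK L hLclosed hKL
end

section
/- Let K be a compact subset of a Banach space X whose linear span is infinite-dimensional. If the sequence of Kolmogorov widths (d_n(K))_{n≥0} is lacunary, then every bounded linear operator T on X with TK ⊇ K leaves the closed linear span V_K of K invariant; that is, G(K) ⊆ A_K. -/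
open Filter Topology Metric
open scoped ENNReal NNReal

/-!
Suppose `T y ∉ V_K` for some `y ∈ K`, and take a continuous functional `ℓ` vanishing on `K` with
`ℓ (T y) = 1`. If an `(n+1)`-dimensional subspace `W` is `δ`-close to `K`, then `T W` is
`‖T‖ δ`-close to `T K ⊇ K` and contains a vector `T w` near `T y`, where `ℓ` is about `1`.
Cutting `T W` down to `T W ⊓ ker ℓ` costs one dimension and, since `ℓ` vanishes on `K`, only a
bounded multiple of `δ` in the approximation. Hence `d_n ≤ C d_{n+1}` as soon as the widths are
small. This keeps every width positive (`d_0 > 0` because `K ⊄ {0}`) and the ratios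
`d_{n+1} / d_n` eventually above `1 / C`, so the widths are not lacunary.
-/

theorem Submodule.exists_le_finrank_eq {𝕜 E : Type*} [DivisionRing 𝕜] [AddCommGroup E]
    [Module 𝕜 E] (hE : ¬ FiniteDimensional 𝕜 E) (W : Submodule 𝕜 E) [FiniteDimensional 𝕜 W]
    {n : ℕ} (hn : Module.finrank 𝕜 W ≤ n) :
    ∃ W' : Submodule 𝕜 E, W ≤ W' ∧ FiniteDimensional 𝕜 W' ∧ Module.finrank 𝕜 W' = n := by
  induction n, hn using Nat.le_induction with
  | base => exact ⟨W, le_rfl, inferInstance, rfl⟩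
  | succ n _ ih =>
    obtain ⟨W', hWW', _, hW'⟩ := ih
    obtain ⟨v, hv⟩ : ∃ v, v ∉ W' := by
      by_contra! h
      rw [← Submodule.eq_top_iff'] at h
      have : FiniteDimensional 𝕜 (⊤ : Submodule 𝕜 E) := h ▸ inferInstance
      exact hE (Module.Finite.equiv Submodule.topEquiv)
    have hv0 : v ≠ 0 := by rintro rfl; exact hv W'.zero_mem
    refine ⟨W' ⊔ 𝕜 ∙ v, hWW'.trans le_sup_left, inferInstance, ?_⟩
    have := Submodule.finrank_sup_add_finrank_inf_eq W' (𝕜 ∙ v)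
    rwa [((Submodule.disjoint_span_singleton' hv0).2 hv).eq_bot, finrank_bot, add_zero,
      finrank_span_singleton hv0, hW'] at this

theorem Submodule.exists_strongDual_vanishing_eq_one_of_notMem {X : Type*} [NormedAddCommGroup X]
    [NormedSpace ℝ X] {V : Submodule ℝ X} [IsClosed (V : Set X)] {x : X} (hx : x ∉ V) :
    ∃ ℓ : StrongDual ℝ X, (∀ v ∈ V, ℓ v = 0) ∧ ℓ x = 1 := by
  have hx' : ‖V.mkQ x‖ ≠ 0 := by
    rwa [norm_ne_zero_iff, Submodule.mkQ_apply, Ne, Submodule.Quotient.mk_eq_zero]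
  obtain ⟨g, -, hg⟩ := exists_dual_vector ℝ (V.mkQ x) hx'
  refine ⟨(‖V.mkQ x‖⁻¹ • g).comp V.mkQL, fun v hv => ?_, ?_⟩
  · simp [(Submodule.Quotient.mk_eq_zero V).2 hv]
  · change ‖V.mkQ x‖⁻¹ * g (V.mkQ x) = 1
    rw [hg]
    exact inv_mul_cancel₀ hx'

theorem ENNReal.le_ofReal_mul_of_forall_le_ofReal {a b : ℝ≥0∞} {C ε : ℝ} (hε : 0 < ε)
    (hb : b ≤ ENNReal.ofReal ε)
    (h : ∀ δ, 0 < δ → δ ≤ ε → b ≤ ENNReal.ofReal δ → a ≤ ENNReal.ofReal (C * δ)) :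
    a ≤ ENNReal.ofReal C * b := by
  rcases eq_or_ne b 0 with rfl | hb0
  · rw [mul_zero]
    have hlim : Tendsto (fun δ => ENNReal.ofReal (C * δ)) (𝓝[>] 0) (𝓝 0) :=
      ((ENNReal.continuous_ofReal.comp (continuous_const_mul C)).tendsto' 0 0 (by simp)).mono_left
        nhdsWithin_le_nhds
    refine ge_of_tendsto hlim ?_
    filter_upwards [Ioc_mem_nhdsGT hε] with δ hδ using h δ hδ.1 hδ.2 (by simp)
  · have hbtop : b ≠ ⊤ := ne_top_of_le_ne_top ENNReal.ofReal_ne_top hb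
    have := h b.toReal (ENNReal.toReal_pos hb0 hbtop) (ENNReal.toReal_le_of_le_ofReal hε.le hb)
      (ENNReal.ofReal_toReal hbtop).ge
    rwa [ENNReal.ofReal_mul' ENNReal.toReal_nonneg, ENNReal.ofReal_toReal hbtop] at this

theorem not_lacunary_of_le_mul_succ {a : ℕ → ℝ≥0∞} (ha0 : a 0 ≠ 0)
    (ha : Tendsto a atTop (𝓝 0)) {c ε : ℝ≥0∞} (hc : c ≠ ⊤) (hε : 0 < ε)
    (h : ∀ n, a (n + 1) ≤ ε → a n ≤ c * a (n + 1)) :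
    ¬ Lacunary a := by
  have hpos : ∀ n, a n ≠ 0 := by
    intro n
    induction n with
    | zero => exact ha0
    | succ n ih => exact fun h0 => ih (le_zero_iff.1 (by simpa [h0] using h n (by simp [h0])))
  have hratio : ∀ᶠ n in atTop, c⁻¹ ≤ a (n + 1) / a n := by
    filter_upwards [(tendsto_add_atTop_iff_nat 1).2 ha |>.eventually (gt_mem_nhds hε)] with n hn
    have hn' := h n hn.le
    have hc0 : c ≠ 0 := by rintro rfl; exact hpos n (le_zero_iff.1 (by simpa using hn'))
    rwa [ENNReal.le_div_iff_mul_le (Or.inl (hpos n)) (Or.inr hn.ne_top),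
      ENNReal.inv_mul_le_iff hc0 hc]
  intro hlac
  have := (le_liminf_of_le (by isBoundedDefault) hratio).trans_eq hlac
  exact hc (ENNReal.inv_eq_zero.1 (le_zero_iff.1 this))

section KolmogorovWidth

variable {X : Type*} [NormedAddCommGroup X] [NormedSpace ℝ X] {K : Set X}

theorem kolWidth_le_ofReal (hX : ¬ FiniteDimensional ℝ X) {n : ℕ} (W : Submodule ℝ X)
    [FiniteDimensional ℝ W] (hW : Module.finrank ℝ W ≤ n) {η : ℝ}
    (hη : ∀ x ∈ K, ∃ w ∈ W, dist x w ≤ η) :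
    kolWidth K n ≤ ENNReal.ofReal η := by
  obtain ⟨W', hWW', hW'fin, hW'⟩ := W.exists_le_finrank_eq hX hW
  refine (iInf₂_le W' ⟨hW'fin, hW'⟩).trans (iSup₂_le fun x hx => ?_)
  obtain ⟨w, hw, hxw⟩ := hη x hx
  calc infEDist x (W' : Set X) ≤ edist x w := infEDist_le_edist_of_mem (hWW' hw)
    _ ≤ ENNReal.ofReal η := by rw [edist_dist]; exact ENNReal.ofReal_le_ofReal hxw

theorem exists_submodule_forall_dist_lt_of_kolWidth_lt {n : ℕ} {δ : ℝ}
    (h : kolWidth K n < ENNReal.ofReal δ) :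
    ∃ W : Submodule ℝ X, FiniteDimensional ℝ W ∧ Module.finrank ℝ W = n ∧
      ∀ x ∈ K, ∃ w ∈ W, dist x w < δ := by
  simp only [kolWidth, iInf_lt_iff] at h
  obtain ⟨W, ⟨hWfin, hW⟩, hsup⟩ := h
  refine ⟨W, hWfin, hW, fun x hx => ?_⟩
  obtain ⟨w, hw, hxw⟩ := infEDist_lt_iff.1 ((le_iSup₂ (f := fun x (_ : x ∈ K) =>
    infEDist x (W : Set X)) x hx).trans_lt hsup)
  refine ⟨w, hw, ?_⟩
  rwa [edist_dist, ENNReal.ofReal_lt_ofReal_iff_of_nonneg dist_nonneg] at hxw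

theorem tendsto_kolWidth_atTop_zero (hX : ¬ FiniteDimensional ℝ X) (hK : IsCompact K) :
    Tendsto (kolWidth K) atTop (𝓝 0) := by
  refine ENNReal.tendsto_atTop_zero.2 fun ε hε => ?_
  obtain ⟨r, -, hr0, hrε⟩ := ENNReal.lt_iff_exists_real_btwn.1 hε
  obtain ⟨t, ht, hKt⟩ :=
    totallyBounded_iff.1 hK.totallyBounded r (ENNReal.ofReal_pos.1 hr0)
  have := FiniteDimensional.span_of_finite ℝ ht
  refine ⟨Module.finrank ℝ (Submodule.span ℝ t), fun n hn =>
    (kolWidth_le_ofReal hX _ hn fun x hx => ?_).trans hrε.le⟩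
  obtain ⟨y, hy, hxy⟩ := Set.mem_iUnion₂.1 (hKt hx)
  exact ⟨y, Submodule.subset_span hy, (mem_ball.1 hxy).le⟩

theorem kolWidth_zero_ne_zero (hK : ¬ FiniteDimensional ℝ (Submodule.span ℝ K)) :
    kolWidth K 0 ≠ 0 := by
  refine fun h => hK ?_
  suffices Submodule.span ℝ K = ⊥ by rw [this]; infer_instance
  refine Submodule.span_eq_bot.2 fun x hx => edist_eq_zero.1 (le_zero_iff.1 (h ▸ ?_))
  refine le_iInf₂ fun V ⟨_, hV⟩ => ?_
  rw [Submodule.finrank_eq_zero.1 hV, Submodule.bot_coe, ← infEDist_singleton]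
  exact le_iSup₂ (f := fun x (_ : x ∈ K) => infEDist x ({0} : Set X)) x hx

theorem kolWidth_le_ofReal_inf_ker (hX : ¬ FiniteDimensional ℝ X) {n : ℕ}
    (W : Submodule ℝ X) [FiniteDimensional ℝ W] (hW : Module.finrank ℝ W ≤ n + 1)
    {ℓ : StrongDual ℝ X} (hℓ : ∀ x ∈ K, ℓ x = 0) {z : X} (hz : z ∈ W) (hℓz : ℓ z ≠ 0) {η : ℝ}
    (hη : ∀ x ∈ K, ∃ w ∈ W, dist x w ≤ η) :
    kolWidth K n ≤ ENNReal.ofReal ((1 + ‖ℓ‖ * ‖z‖ / |ℓ z|) * η) := by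
  have hlt : W ⊓ LinearMap.ker (ℓ : X →ₗ[ℝ] ℝ) < W :=
    inf_le_left.lt_of_ne fun h => hℓz (h ▸ hz : z ∈ W ⊓ _).2
  have := Submodule.finrank_lt_finrank_of_lt hlt
  refine kolWidth_le_ofReal hX (W ⊓ LinearMap.ker (ℓ : X →ₗ[ℝ] ℝ)) (by omega) fun x hx => ?_
  obtain ⟨w, hw, hxw⟩ := hη x hx
  have hℓw : |ℓ w| ≤ ‖ℓ‖ * η :=
    calc |ℓ w| = ‖ℓ w - ℓ x‖ := by rw [hℓ x hx, sub_zero, Real.norm_eq_abs]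
      _ ≤ ‖ℓ‖ * dist w x := ℓ.dist_le_opNorm w x
      _ ≤ ‖ℓ‖ * η := by rw [dist_comm]; gcongr
  refine ⟨w - (ℓ w / ℓ z) • z, ⟨W.sub_mem hw (W.smul_mem _ hz), by simp [hℓz]⟩, ?_⟩
  calc dist x (w - (ℓ w / ℓ z) • z) ≤ dist x w + ‖(ℓ w / ℓ z) • z‖ := by
        rw [dist_eq_norm, dist_eq_norm, sub_sub_eq_add_sub, add_sub_right_comm]
        exact norm_add_le _ _
    _ = dist x w + |ℓ w| * ‖z‖ / |ℓ z| := by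
        rw [norm_smul, Real.norm_eq_abs, abs_div]; ring
    _ ≤ η + ‖ℓ‖ * η * ‖z‖ / |ℓ z| := by gcongr
    _ = (1 + ‖ℓ‖ * ‖z‖ / |ℓ z|) * η := by ring

theorem exists_kolWidth_le_mul_of_subset_image (hX : ¬ FiniteDimensional ℝ X)
    {T : X →L[ℝ] X} (hT : K ⊆ T '' K) {ℓ : StrongDual ℝ X} (hℓ : ∀ x ∈ K, ℓ x = 0)
    {y : X} (hy : y ∈ K) (hℓy : ℓ (T y) = 1) :
    ∃ C ε : ℝ, 0 < ε ∧ ∀ n δ, 0 < δ → δ ≤ ε →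
      kolWidth K (n + 1) ≤ ENNReal.ofReal δ → kolWidth K n ≤ ENNReal.ofReal (C * δ) := by
  refine ⟨2 * ‖T‖ * (1 + 2 * ‖ℓ‖ * ‖T‖ * (‖y‖ + 2)), 1 / (4 * ‖ℓ‖ * ‖T‖ + 1), by positivity,
    fun n δ hδ hδε hwidth => ?_⟩
  rw [le_div_iff₀ (by positivity)] at hδε
  obtain ⟨W, _, hW, hKW⟩ := exists_submodule_forall_dist_lt_of_kolWidth_lt
    (hwidth.trans_lt ((ENNReal.ofReal_lt_ofReal_iff (by positivity)).2 (by linarith : δ < 2 * δ)))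
  have hKTW : ∀ x ∈ K, ∃ w ∈ W.map (T : X →ₗ[ℝ] X), dist x w ≤ ‖T‖ * (2 * δ) := by
    intro x hx
    obtain ⟨x', hx', rfl⟩ := hT hx
    obtain ⟨w, hw, hxw⟩ := hKW x' hx'
    exact ⟨T w, Submodule.mem_map_of_mem hw, (T.dist_le_opNorm x' w).trans (by gcongr)⟩
  obtain ⟨w, hw, hyw⟩ := hKW y hy
  have hδ1 : δ ≤ 1 := by nlinarith [mul_nonneg hδ.le (by positivity : 0 ≤ 4 * ‖ℓ‖ * ‖T‖)]
  have hℓTw : 1 / 2 ≤ ℓ (T w) := by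
    have := calc dist (ℓ (T y)) (ℓ (T w)) ≤ ‖ℓ‖ * dist (T y) (T w) := ℓ.dist_le_opNorm _ _
      _ ≤ ‖ℓ‖ * (‖T‖ * (2 * δ)) := by gcongr; exact (T.dist_le_opNorm y w).trans (by gcongr)
    rw [Real.dist_eq, hℓy, abs_le] at this
    nlinarith [norm_nonneg ℓ, norm_nonneg T]
  have hTw : ‖T w‖ ≤ ‖T‖ * (‖y‖ + 2) := by
    refine T.le_opNorm_of_le ?_
    linarith [norm_le_norm_add_norm_sub' w y, dist_eq_norm w y, dist_comm y w]
  have hratio : ‖ℓ‖ * ‖T w‖ / |ℓ (T w)| ≤ 2 * ‖ℓ‖ * ‖T‖ * (‖y‖ + 2) := by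
    rw [abs_of_pos (by linarith), div_le_iff₀ (by linarith)]
    have hP : 0 ≤ ‖ℓ‖ * ‖T‖ * (‖y‖ + 2) := by positivity
    nlinarith [mul_le_mul_of_nonneg_left hTw (norm_nonneg ℓ), mul_le_mul_of_nonneg_left hℓTw hP]
  refine (kolWidth_le_ofReal_inf_ker hX _ ((Submodule.finrank_map_le _ _).trans hW.le) hℓ
    (z := T w) (Submodule.mem_map_of_mem hw) (by linarith) hKTW).trans
    (ENNReal.ofReal_le_ofReal ?_)
  calc (1 + ‖ℓ‖ * ‖T w‖ / |ℓ (T w)|) * (‖T‖ * (2 * δ))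
      ≤ (1 + 2 * ‖ℓ‖ * ‖T‖ * (‖y‖ + 2)) * (‖T‖ * (2 * δ)) := by gcongr
    _ = 2 * ‖T‖ * (1 + 2 * ‖ℓ‖ * ‖T‖ * (‖y‖ + 2)) * δ := by ring

end KolmogorovWidth

theorem covering_leaves_span_invariant_of_lacunary_general
    {X : Type*} [NormedAddCommGroup X] [NormedSpace ℝ X]
    (K : Set X) (hK : IsCompact K)
    (hinf : ¬ FiniteDimensional ℝ (Submodule.span ℝ K))
    (hlac : Lacunary (fun n => kolWidth K n))
    (T : X →L[ℝ] X) (hT : K ⊆ T '' K) :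
    ∀ x ∈ (Submodule.span ℝ K).topologicalClosure,
      T x ∈ (Submodule.span ℝ K).topologicalClosure := by
  set V := (Submodule.span ℝ K).topologicalClosure
  have hV : IsClosed (V : Set X) := Submodule.isClosed_topologicalClosure _
  have hX : ¬ FiniteDimensional ℝ X := fun _ => hinf inferInstance
  suffices hTK : ∀ y ∈ K, T y ∈ V from fun x hx =>
    Submodule.topologicalClosure_minimal (t := V.comap (T : X →ₗ[ℝ] X)) _
      (Submodule.span_le.2 hTK) (hV.preimage T.continuous) hx
  intro y hy
  by_contra hTy
  obtain ⟨ℓ, hℓV, hℓy⟩ := Submodule.exists_strongDual_vanishing_eq_one_of_notMem hTy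
  obtain ⟨C, ε, hε, hC⟩ := exists_kolWidth_le_mul_of_subset_image hX hT
    (fun x hx => hℓV x (Submodule.le_topologicalClosure _ (Submodule.subset_span hx))) hy hℓy
  exact not_lacunary_of_le_mul_succ (kolWidth_zero_ne_zero hinf)
    (tendsto_kolWidth_atTop_zero hX hK) ENNReal.ofReal_ne_top (ENNReal.ofReal_pos.2 hε)
    (fun n hn => ENNReal.le_ofReal_mul_of_forall_le_ofReal hε hn (hC n)) hlac

/-- If the widths of a compact `K` with infinite-dimensional span form a lacunary sequence,
then every operator covering `K` leaves the closed linear span `V_K` invariant. -/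
theorem covering_leaves_span_invariant_of_lacunary
    {X : Type*} [NormedAddCommGroup X] [NormedSpace ℝ X] [CompleteSpace X]
    (K : Set X) (hK : IsCompact K)
    (hinf : ¬ FiniteDimensional ℝ (Submodule.span ℝ K))
    (hlac : Lacunary (fun n => kolWidth K n))
    (T : X →L[ℝ] X) (hT : K ⊆ T '' K) :
    ∀ x ∈ (Submodule.span ℝ K).topologicalClosure,
      T x ∈ (Submodule.span ℝ K).topologicalClosure :=
  covering_leaves_span_invariant_of_lacunary_general K hK hinf hlac T hT
end
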